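/- arXiv:2312.16238 — 3 statements merged into one kernel-verified Lean document; each statement's English description precedes it below -/
import Mathlib

section
/- Let K₁ ∈ L¹(ℝ) be real-valued with K₁(t) − K₁(−t) ≥ 0 for all t ≥ 0 and ∫_0^∞ [K₁(t) − K₁(−t)] dt > 0. Define b(λ) = ∫_0^∞ (1 − cos λt)[K₁(t) − K₁(−t)] dt − i ∫_{-∞}^∞ sin(λt)·sign(t)·K₁(t) dt. Then for every real λ ≠ 0, the real part of b(λ) is strictly positive; in particular b(λ) ≠ 0 and the argument of b(λ) lies strictly between −π/2 and π/2. -/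
open MeasureTheory Complex Filter

/- The real part of `b λ` is `∫₀^∞ (1 - cos λt) g(t) dt` with `g = K₁ - K₁(-·) ≥ 0` of positive
integral. Since `λ ≠ 0`, the weight `1 - cos λt` vanishes only on the countable set `2πℤ/λ`, so it
is positive almost everywhere, and multiplying the nonnegative `g` by an a.e. positive bounded
weight keeps its support, hence keeps its integral positive. A complex number of positive real
part has argument in `(-π/2, π/2)`. -/

theorem integral_mul_pos_of_ae_pos {α : Type*} [MeasurableSpace α] {μ : Measure α}
    {f g : α → ℝ} {c : ℝ} (hf_meas : AEStronglyMeasurable f μ) (hf_bound : ∀ᵐ x ∂μ, ‖f x‖ ≤ c)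
    (hf_pos : ∀ᵐ x ∂μ, 0 < f x) (hg_nonneg : 0 ≤ᵐ[μ] g) (hg : 0 < ∫ x, g x ∂μ) :
    0 < ∫ x, f x * g x ∂μ := by
  have hg_int : Integrable g μ := Integrable.of_integral_ne_zero hg.ne'
  have hfg_nonneg : 0 ≤ᵐ[μ] fun x => f x * g x := by
    filter_upwards [hf_pos, hg_nonneg] with x hfx hgx
    exact mul_nonneg hfx.le hgx
  have hf_conull : μ (Function.support f)ᶜ = 0 := by
    simpa [ae_iff, Function.support, Set.compl_def] using hf_pos.mono fun x hx => hx.ne'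
  rw [integral_pos_iff_support_of_nonneg_ae hg_nonneg hg_int] at hg
  rwa [integral_pos_iff_support_of_nonneg_ae hfg_nonneg (hg_int.bdd_mul hf_meas hf_bound),
    Function.support_mul, Set.inter_comm, measure_inter_conull hf_conull]

theorem ae_cos_mul_lt_one {l : ℝ} (hl : l ≠ 0) : ∀ᵐ t : ℝ, Real.cos (l * t) < 1 := by
  have hsub : {t : ℝ | ¬Real.cos (l * t) < 1} ⊆ Set.range fun n : ℤ => n * (2 * Real.pi) / l := by
    intro t ht
    obtain ⟨n, hn⟩ := (Real.cos_eq_one_iff (l * t)).1 (le_antisymm (Real.cos_le_one _) (not_lt.1 ht))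
    exact ⟨n, by field_simp; linarith⟩
  exact ae_iff.2 (measure_mono_null hsub ((Set.countable_range _).measure_zero _))

theorem norm_one_sub_cos_le_two (x : ℝ) : ‖1 - Real.cos x‖ ≤ 2 :=
  abs_le.2 ⟨by linarith [Real.cos_le_one x], by linarith [Real.neg_one_le_cos x]⟩

theorem stmt_4_general (K₁ : ℝ → ℝ)
    (hpos : ∀ t : ℝ, 0 ≤ t → 0 ≤ K₁ t - K₁ (-t))
    (hint : 0 < ∫ t in Set.Ioi (0 : ℝ), (K₁ t - K₁ (-t)))
    (b : ℝ → ℂ)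
    (hb : ∀ l : ℝ, b l =
      ((∫ t in Set.Ioi (0 : ℝ), (1 - Real.cos (l * t)) * (K₁ t - K₁ (-t)) : ℝ) : ℂ) -
        Complex.I * ((∫ t : ℝ, Real.sin (l * t) * (Real.sign t * K₁ t) : ℝ) : ℂ)) :
    ∀ l : ℝ, l ≠ 0 →
      0 < (b l).re ∧ b l ≠ 0 ∧
        -(Real.pi / 2) < Complex.arg (b l) ∧ Complex.arg (b l) < Real.pi / 2 := by
  intro l hl
  have hre : (b l).re = ∫ t in Set.Ioi 0, (1 - Real.cos (l * t)) * (K₁ t - K₁ (-t)) := by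
    simp [hb l]
  have hre_pos : 0 < (b l).re := by
    rw [hre]
    refine integral_mul_pos_of_ae_pos (c := 2) (by fun_prop)
      (ae_of_all _ fun t => norm_one_sub_cos_le_two _)
      (ae_restrict_of_ae ((ae_cos_mul_lt_one hl).mono fun t ht => sub_pos.2 ht)) ?_ hint
    exact (ae_restrict_mem measurableSet_Ioi).mono fun t ht => hpos t (le_of_lt ht)
  refine ⟨hre_pos, fun h => by simp [h] at hre_pos, ?_⟩
  exact abs_lt.1 (abs_arg_lt_pi_div_two_iff.2 (Or.inl hre_pos))

theorem stmt_4 (K₁ : ℝ → ℝ) (hK₁ : Integrable K₁)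
    (hpos : ∀ t : ℝ, 0 ≤ t → 0 ≤ K₁ t - K₁ (-t))
    (hint : 0 < ∫ t in Set.Ioi (0 : ℝ), (K₁ t - K₁ (-t)))
    (b : ℝ → ℂ)
    (hb : ∀ l : ℝ, b l =
      ((∫ t in Set.Ioi (0 : ℝ), (1 - Real.cos (l * t)) * (K₁ t - K₁ (-t)) : ℝ) : ℂ) -
        Complex.I * ((∫ t : ℝ, Real.sin (l * t) * (Real.sign t * K₁ t) : ℝ) : ℂ)) :
    ∀ l : ℝ, l ≠ 0 →
      0 < (b l).re ∧ b l ≠ 0 ∧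
        -(Real.pi / 2) < Complex.arg (b l) ∧ Complex.arg (b l) < Real.pi / 2 :=
  stmt_4_general K₁ hpos hint b hb
end

section
/- Let K₁ ∈ L¹(ℝ) be real-valued with K₁(t) − K₁(−t) ≥ 0 for t ≥ 0, ∫_0^∞ [K₁(t) − K₁(−t)]dt > 0, ∫ t²|K₁(t)|dt < ∞, ν₁(K̃₁) = 0, and ν₂(K̃₁) = ∫_0^∞ t²[K₁(t) − K₁(−t)]dt > 0. Define b as above and c(λ) = (1 + 1/λ²)·b(λ) for λ ≠ 0, extended by c(0) = (1/2)ν₂(K̃₁). Then c is continuous on ℝ, has positive real part everywhere, and in particular c(λ) ≠ 0 for all λ ∈ ℝ. -/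
open MeasureTheory Complex Filter

/-!
Write `1 - cos x = x² k(x)` and `sin x - x = x² h(x)` with `k(x) = sinc²(x/2)/2` and `h`
continuous and bounded. Using `ν₁(K̃₁) = 0` to remove the linear term of the sine, for `λ ≠ 0`
`c(λ) = (1 + λ²) (A(λ) - i B(λ))` with `A(λ) = ∫₀^∞ k(λt) t² [K₁(t) - K₁(-t)] dt` and
`B(λ) = ∫ h(λt) t² K̃₁(t) dt`. The second moment bound makes `A` and `B` continuous by dominated
convergence, and at `λ = 0` the formula gives `ν₂(K̃₁)/2`, so it holds everywhere. Finally
`A(λ) > 0`, as `k(λt) > 0` off the countable set of zeros of `sinc(λt/2)`.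
-/

theorem Real.measurable_sign : Measurable Real.sign :=
  Measurable.ite measurableSet_Iio measurable_const
    (Measurable.ite measurableSet_Ioi measurable_const measurable_const)

theorem Real.abs_sign_le_one (x : ℝ) : |Real.sign x| ≤ 1 := by
  rcases Real.sign_apply_eq x with h | h | h <;> simp [h]

/-- The continuous extension of `(1 - cos x) / x²`. -/
noncomputable def oneSubCosDivSq (x : ℝ) : ℝ := Real.sinc (x / 2) ^ 2 / 2

/-- `(sin x - x) / x²`; the junk value `0` at `x = 0` is also its limit there. -/
noncomputable def sinSubSelfDivSq (x : ℝ) : ℝ := (Real.sin x - x) / x ^ 2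

theorem one_sub_cos_eq_sq_mul_oneSubCosDivSq (x : ℝ) :
    1 - Real.cos x = x ^ 2 * oneSubCosDivSq x := by
  rcases eq_or_ne x 0 with rfl | hx
  · simp
  have := Real.sin_sq_eq_half_sub (x / 2)
  rw [show 2 * (x / 2) = x by ring] at this
  rw [oneSubCosDivSq, Real.sinc_of_ne_zero (by positivity)]
  field_simp
  linarith

theorem oneSubCosDivSq_zero : oneSubCosDivSq 0 = 1 / 2 := by
  simp [oneSubCosDivSq]

theorem continuous_oneSubCosDivSq : Continuous oneSubCosDivSq :=
  ((Real.continuous_sinc.comp (continuous_id.div_const 2)).pow 2).div_const 2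

theorem abs_oneSubCosDivSq_le (x : ℝ) : |oneSubCosDivSq x| ≤ 1 / 2 := by
  rw [oneSubCosDivSq, abs_div, abs_pow, abs_two]
  gcongr
  exact pow_le_one₀ (abs_nonneg _) (Real.abs_sinc_le_one _)

theorem countable_setOf_sinc_mul_div_two_eq_zero (l : ℝ) :
    {t : ℝ | Real.sinc (l * t / 2) = 0}.Countable := by
  refine (Set.countable_range fun n : ℤ => 2 * (n * Real.pi) / l).mono fun t ht => ?_
  have hne : l * t / 2 ≠ 0 := fun h => by simp [h] at ht
  rw [Set.mem_ofPred_eq, Real.sinc_of_ne_zero hne, div_eq_zero_iff, or_iff_left hne,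
    Real.sin_eq_zero_iff] at ht
  obtain ⟨n, hn⟩ := ht
  have hl : l ≠ 0 := by rintro rfl; simp at hne
  exact ⟨n, by simp only [hn]; field_simp⟩

theorem ae_oneSubCosDivSq_mul_pos (l : ℝ) : ∀ᵐ t, 0 < oneSubCosDivSq (l * t) := by
  filter_upwards [measure_eq_zero_iff_ae_notMem.1
    ((countable_setOf_sinc_mul_div_two_eq_zero l).measure_zero volume)] with t ht
  have : Real.sinc (l * t / 2) ≠ 0 := ht
  unfold oneSubCosDivSq
  positivity

theorem sin_eq_sq_mul_sinSubSelfDivSq_add (x : ℝ) :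
    Real.sin x = x ^ 2 * sinSubSelfDivSq x + x := by
  rcases eq_or_ne x 0 with rfl | hx
  · simp
  rw [sinSubSelfDivSq]
  field_simp
  ring

theorem abs_sinSubSelfDivSq_le (x : ℝ) : |sinSubSelfDivSq x| ≤ |x| / 6 := by
  rw [sinSubSelfDivSq, abs_div, abs_sub_comm, abs_pow, ← abs_pow, abs_sq]
  rcases eq_or_ne x 0 with rfl | hx
  · simp
  rw [div_le_div_iff₀ (by positivity) (by norm_num), ← sq_abs x]
  nlinarith [Real.abs_sub_sin_le x, abs_nonneg x]

theorem abs_sinSubSelfDivSq_le_one (x : ℝ) : |sinSubSelfDivSq x| ≤ 1 := by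
  rcases le_or_gt |x| 2 with hx | hx
  · linarith [abs_sinSubSelfDivSq_le x]
  have hx2 : 0 < x ^ 2 := by rw [← sq_abs]; positivity
  rw [sinSubSelfDivSq, abs_div, abs_of_pos hx2, div_le_one hx2, ← sq_abs x]
  calc |Real.sin x - x| ≤ |Real.sin x| + |x| := abs_sub _ _
    _ ≤ 2 * |x| := by linarith [Real.abs_sin_le_abs (x := x)]
    _ ≤ |x| ^ 2 := by nlinarith

theorem continuous_sinSubSelfDivSq : Continuous sinSubSelfDivSq := by
  refine continuous_iff_continuousAt.2 fun x => ?_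
  rcases eq_or_ne x 0 with rfl | hx
  · refine tendsto_iff_norm_sub_tendsto_zero.2 <| squeeze_zero (fun _ => norm_nonneg _)
      (fun y => ?_) ((continuous_abs.div_const 6).tendsto' 0 0 (by simp))
    rw [show sinSubSelfDivSq 0 = 0 by simp [sinSubSelfDivSq], sub_zero, Real.norm_eq_abs]
    exact abs_sinSubSelfDivSq_le y
  · exact ((Real.continuous_sin.sub continuous_id).continuousAt).div
      (continuous_pow 2).continuousAt (pow_ne_zero 2 hx)

section ParametricIntegral

variable {μ : Measure ℝ} {φ F : ℝ → ℝ} {C : ℝ}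

theorem integrable_comp_mul_mul (hφ : Continuous φ) (hφC : ∀ x, |φ x| ≤ C)
    (hF : Integrable F μ) (l : ℝ) : Integrable (fun t => φ (l * t) * F t) μ :=
  hF.bdd_mul (hφ.comp (continuous_const_mul l)).aestronglyMeasurable
    (ae_of_all _ fun t => hφC (l * t))

theorem continuous_integral_comp_mul_mul (hφ : Continuous φ) (hφC : ∀ x, |φ x| ≤ C)
    (hF : Integrable F μ) : Continuous fun l => ∫ t, φ (l * t) * F t ∂μ :=
  continuous_of_dominated (bound := fun t => C * |F t|)
    (fun l => (integrable_comp_mul_mul hφ hφC hF l).aestronglyMeasurable)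
    (fun l => ae_of_all _ fun t => by
      rw [norm_mul, Real.norm_eq_abs, Real.norm_eq_abs]
      exact mul_le_mul_of_nonneg_right (hφC _) (abs_nonneg _))
    (hF.abs.const_mul C)
    (ae_of_all _ fun t => (hφ.comp (continuous_mul_const t)).mul continuous_const)

end ParametricIntegral

theorem integral_mul_pos_of_ae_pos_s8 {α : Type*} [MeasurableSpace α] {μ : Measure α}
    {w f : α → ℝ} (hf0 : 0 ≤ᵐ[μ] f) (hf : 0 < ∫ x, f x ∂μ) (hw : ∀ᵐ x ∂μ, 0 < w x)
    (hwf : Integrable (fun x => w x * f x) μ) : 0 < ∫ x, w x * f x ∂μ := by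
  have hwf0 : 0 ≤ᵐ[μ] fun x => w x * f x := by
    filter_upwards [hf0, hw] with x h1 h2
    exact mul_nonneg h2.le h1
  have hsupp : Function.support (fun x => w x * f x) =ᵐ[μ] Function.support f := by
    filter_upwards [hw] with x hx
    change (w x * f x ≠ 0) = (f x ≠ 0)
    simp [hx.ne']
  rw [integral_pos_iff_support_of_nonneg_ae hwf0 hwf, measure_congr hsupp,
    ← integral_pos_iff_support_of_nonneg_ae hf0 (Integrable.of_integral_ne_zero hf.ne')]
  exact hf

theorem integral_one_sub_cos_mul_mul (μ : Measure ℝ) (f : ℝ → ℝ) (l : ℝ) :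
    ∫ t, (1 - Real.cos (l * t)) * f t ∂μ =
      l ^ 2 * ∫ t, oneSubCosDivSq (l * t) * (t ^ 2 * f t) ∂μ := by
  rw [← integral_const_mul]
  congr 1 with t
  rw [one_sub_cos_eq_sq_mul_oneSubCosDivSq]
  ring

theorem integral_sin_mul_mul {μ : Measure ℝ} {f : ℝ → ℝ}
    (hf₁ : Integrable (fun t => t * f t) μ) (hf₂ : Integrable (fun t => t ^ 2 * f t) μ) (l : ℝ) :
    ∫ t, Real.sin (l * t) * f t ∂μ =
      l ^ 2 * ∫ t, sinSubSelfDivSq (l * t) * (t ^ 2 * f t) ∂μ + l * ∫ t, t * f t ∂μ := by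
  have hrem := integrable_comp_mul_mul continuous_sinSubSelfDivSq abs_sinSubSelfDivSq_le_one hf₂ l
  rw [← integral_const_mul, ← integral_const_mul,
    ← integral_add (hrem.const_mul _) (hf₁.const_mul l)]
  congr 1 with t
  linear_combination f t * sin_eq_sq_mul_sinSubSelfDivSq_add (l * t)

section Moments

variable {K : ℝ → ℝ}

theorem integrable_sq_mul (hK : AEStronglyMeasurable K)
    (hK₂ : Integrable fun t => t ^ 2 * |K t|) : Integrable fun t => t ^ 2 * K t :=
  hK₂.mono' ((continuous_pow 2).aestronglyMeasurable.mul hK)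
    (ae_of_all _ fun t => by simp)

theorem integrable_sq_mul_sub_comp_neg (hK : AEStronglyMeasurable K)
    (hK₂ : Integrable fun t => t ^ 2 * |K t|) :
    Integrable fun t => t ^ 2 * (K t - K (-t)) := by
  have h := integrable_sq_mul hK hK₂
  refine (h.sub h.comp_neg).congr (ae_of_all _ fun t => ?_)
  simp [mul_sub]

theorem integrable_sq_mul_sign_mul (hK : AEStronglyMeasurable K)
    (hK₂ : Integrable fun t => t ^ 2 * |K t|) :
    Integrable fun t => t ^ 2 * (Real.sign t * K t) :=
  hK₂.mono' ((continuous_pow 2).aestronglyMeasurable.mul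
      (Real.measurable_sign.aestronglyMeasurable.mul hK))
    (ae_of_all _ fun t => by
      rw [Real.norm_eq_abs, abs_mul, abs_mul, abs_pow, sq_abs]
      gcongr
      exact mul_le_of_le_one_left (abs_nonneg _) (Real.abs_sign_le_one t))

theorem integrable_mul_sign_mul (hK : Integrable K)
    (hK₂ : Integrable fun t => t ^ 2 * |K t|) :
    Integrable fun t => t * (Real.sign t * K t) :=
  (hK.abs.add hK₂).mono' (continuous_id.aestronglyMeasurable.mul
      (Real.measurable_sign.aestronglyMeasurable.mul hK.1))
    (ae_of_all _ fun t => by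
      have h1 : |t| ≤ 1 + t ^ 2 := by nlinarith [abs_nonneg t, sq_abs t]
      rw [Real.norm_eq_abs, abs_mul, abs_mul]
      calc |t| * (|Real.sign t| * |K t|) ≤ (1 + t ^ 2) * (1 * |K t|) := by
            gcongr
            exact Real.abs_sign_le_one t
        _ = |K t| + t ^ 2 * |K t| := by ring)

end Moments

section Transforms

variable (K : ℝ → ℝ)

/-- `∫₀^∞ (1 - cos λt) / λ² · [K(t) - K(-t)] dt`, continuously extended to `λ = 0`. -/
noncomputable def oneSubCosTransform (l : ℝ) : ℝ :=
  ∫ t in Set.Ioi 0, oneSubCosDivSq (l * t) * (t ^ 2 * (K t - K (-t)))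

/-- `∫ (sin λt - λt) / λ² · sign(t) K(t) dt`, continuously extended to `λ = 0`. -/
noncomputable def sinRemainderTransform (l : ℝ) : ℝ :=
  ∫ t, sinSubSelfDivSq (l * t) * (t ^ 2 * (Real.sign t * K t))

theorem oneSubCosTransform_zero :
    oneSubCosTransform K 0 = 1 / 2 * ∫ t in Set.Ioi 0, t ^ 2 * (K t - K (-t)) := by
  simp [oneSubCosTransform, oneSubCosDivSq_zero, integral_const_mul]

theorem sinRemainderTransform_zero : sinRemainderTransform K 0 = 0 := by
  simp [sinRemainderTransform, sinSubSelfDivSq]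

theorem integral_one_sub_cos_mul_sub_comp_neg (l : ℝ) :
    ∫ t in Set.Ioi 0, (1 - Real.cos (l * t)) * (K t - K (-t)) = l ^ 2 * oneSubCosTransform K l :=
  integral_one_sub_cos_mul_mul _ _ l

variable {K}

theorem integral_sin_mul_sign_mul (hK : Integrable K) (hK₂ : Integrable fun t => t ^ 2 * |K t|)
    (hν₁ : ∫ t, t * (Real.sign t * K t) = 0) (l : ℝ) :
    ∫ t, Real.sin (l * t) * (Real.sign t * K t) = l ^ 2 * sinRemainderTransform K l := by
  rw [integral_sin_mul_mul (integrable_mul_sign_mul hK hK₂)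
    (integrable_sq_mul_sign_mul hK.1 hK₂), hν₁, mul_zero, add_zero, sinRemainderTransform]

theorem continuous_oneSubCosTransform (hK : AEStronglyMeasurable K)
    (hK₂ : Integrable fun t => t ^ 2 * |K t|) : Continuous (oneSubCosTransform K) :=
  continuous_integral_comp_mul_mul continuous_oneSubCosDivSq abs_oneSubCosDivSq_le
    (integrable_sq_mul_sub_comp_neg hK hK₂).integrableOn

theorem continuous_sinRemainderTransform (hK : AEStronglyMeasurable K)
    (hK₂ : Integrable fun t => t ^ 2 * |K t|) : Continuous (sinRemainderTransform K) :=
  continuous_integral_comp_mul_mul continuous_sinSubSelfDivSq abs_sinSubSelfDivSq_le_one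
    (integrable_sq_mul_sign_mul hK hK₂)

theorem oneSubCosTransform_pos (hK : AEStronglyMeasurable K)
    (hK₂ : Integrable fun t => t ^ 2 * |K t|) (hpos : ∀ t, 0 ≤ t → 0 ≤ K t - K (-t))
    (hν₂ : 0 < ∫ t in Set.Ioi 0, t ^ 2 * (K t - K (-t))) (l : ℝ) :
    0 < oneSubCosTransform K l :=
  integral_mul_pos_of_ae_pos_s8
    ((ae_restrict_mem measurableSet_Ioi).mono fun t ht =>
      mul_nonneg (sq_nonneg t) (hpos t ht.le))
    hν₂ (ae_restrict_of_ae (ae_oneSubCosDivSq_mul_pos l))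
    (integrable_comp_mul_mul continuous_oneSubCosDivSq abs_oneSubCosDivSq_le
      (integrable_sq_mul_sub_comp_neg hK hK₂).integrableOn l)

end Transforms

theorem stmt_8_general (K₁ : ℝ → ℝ) (hK₁ : Integrable K₁)
    (hpos : ∀ t : ℝ, 0 ≤ t → 0 ≤ K₁ t - K₁ (-t))
    (hmom2 : Integrable (fun t : ℝ => t ^ 2 * |K₁ t|))
    (hν₁ : (∫ t : ℝ, t * (Real.sign t * K₁ t)) = 0)
    (hν₂ : 0 < ∫ t in Set.Ioi (0 : ℝ), t ^ 2 * (K₁ t - K₁ (-t)))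
    (b c : ℝ → ℂ)
    (hb : ∀ l : ℝ, b l =
      ((∫ t in Set.Ioi (0 : ℝ), (1 - Real.cos (l * t)) * (K₁ t - K₁ (-t)) : ℝ) : ℂ) -
        Complex.I * ((∫ t : ℝ, Real.sin (l * t) * (Real.sign t * K₁ t) : ℝ) : ℂ))
    (hc : ∀ l : ℝ, l ≠ 0 → c l = (1 + 1 / (l : ℂ) ^ 2) * b l)
    (hc0 : c 0 = (((1 / 2 : ℝ) * ∫ t in Set.Ioi (0 : ℝ), t ^ 2 * (K₁ t - K₁ (-t)) : ℝ) : ℂ)) :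
    Continuous c ∧ (∀ l : ℝ, 0 < (c l).re) ∧ ∀ l : ℝ, c l ≠ 0 := by
  have hc_eq : c = fun l => ((1 + l ^ 2 : ℝ) : ℂ) *
      (oneSubCosTransform K₁ l - I * sinRemainderTransform K₁ l) := by
    funext l
    rcases eq_or_ne l 0 with rfl | hl
    · simp [hc0, oneSubCosTransform_zero, sinRemainderTransform_zero]
    · rw [hc l hl, hb l, integral_one_sub_cos_mul_sub_comp_neg,
        integral_sin_mul_sign_mul hK₁ hmom2 hν₁]
      have : (l : ℂ) ≠ 0 := ofReal_ne_zero.2 hl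
      push_cast
      field_simp
      ring
  have hre (l : ℝ) : 0 < (c l).re := by
    rw [hc_eq, re_ofReal_mul]
    simpa using mul_pos (by positivity : (0 : ℝ) < 1 + l ^ 2)
      (oneSubCosTransform_pos hK₁.1 hmom2 hpos hν₂ l)
  refine ⟨?_, hre, fun l hl => (hre l).ne' (by simp [hl])⟩
  have := continuous_oneSubCosTransform hK₁.1 hmom2
  have := continuous_sinRemainderTransform hK₁.1 hmom2
  rw [hc_eq]
  fun_prop

theorem stmt_8 (K₁ : ℝ → ℝ) (hK₁ : Integrable K₁)
    (hpos : ∀ t : ℝ, 0 ≤ t → 0 ≤ K₁ t - K₁ (-t))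
    (hint : 0 < ∫ t in Set.Ioi (0 : ℝ), (K₁ t - K₁ (-t)))
    (hmom2 : Integrable (fun t : ℝ => t ^ 2 * |K₁ t|))
    (hν₁ : (∫ t : ℝ, t * (Real.sign t * K₁ t)) = 0)
    (hν₂ : 0 < ∫ t in Set.Ioi (0 : ℝ), t ^ 2 * (K₁ t - K₁ (-t)))
    (b c : ℝ → ℂ)
    (hb : ∀ l : ℝ, b l =
      ((∫ t in Set.Ioi (0 : ℝ), (1 - Real.cos (l * t)) * (K₁ t - K₁ (-t)) : ℝ) : ℂ) -
        Complex.I * ((∫ t : ℝ, Real.sin (l * t) * (Real.sign t * K₁ t) : ℝ) : ℂ))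
    (hc : ∀ l : ℝ, l ≠ 0 → c l = (1 + 1 / (l : ℂ) ^ 2) * b l)
    (hc0 : c 0 = (((1 / 2 : ℝ) * ∫ t in Set.Ioi (0 : ℝ), t ^ 2 * (K₁ t - K₁ (-t)) : ℝ) : ℂ)) :
    Continuous c ∧ (∀ l : ℝ, 0 < (c l).re) ∧ ∀ l : ℝ, c l ≠ 0 :=
  stmt_8_general K₁ hK₁ hpos hmom2 hν₁ hν₂ b c hb hc hc0
end

section
/- Let K₀ ∈ L¹(ℝ) be real-valued with K₀(t) + K₀(−t) ≥ 0 for all t ≥ 0, ν₀(K₀) = ∫ K₀ > 0, and ∫ t²|K₀(t)|dt < ∞ with ν₁(K₀) = 0 and ν₂(K₀) > 0. Define d(λ) = ν₀(K₀) − ∫ e^{iλu}K₀(u)du and e(λ) = (1 + 1/λ²)·d(λ) for λ ≠ 0, extended by e(0) = (1/2)ν₂(K₀). Then Re d(λ) = ∫_0^∞ (1 − cos λu)[K₀(u) + K₀(−u)]du ≥ 0 for all λ, and e(λ) ≠ 0 for all real λ ≠ 0. -/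
/-! Folding `∫ (1 - cos (λu)) K₀(u) du` onto `(0, ∞)` writes `Re d(λ)` as the integral of a
nonnegative function. For `λ ≠ 0` it cannot vanish: `cos (λu) ≠ 1` almost everywhere, so
`K₀(u) + K₀(-u)` would vanish a.e. on `(0, ∞)`, forcing `ν₀(K₀) = 0`. Hence `d(λ) ≠ 0`, and
`1 + 1/λ²` is a nonzero real. -/

open MeasureTheory Complex Filter

theorem integral_eq_integral_Ioi_add_comp_neg {E : Type*} [NormedAddCommGroup E]
    [NormedSpace ℝ E] {f : ℝ → E} (hf : Integrable f) :
    ∫ x, f x = ∫ x in Set.Ioi 0, (f x + f (-x)) := by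
  have hf_neg : Integrable (fun x => f (-x)) := hf.comp_neg
  rw [integral_add hf.integrableOn hf_neg.integrableOn, integral_comp_neg_Ioi, neg_zero,
    ← Set.compl_Ioi, integral_add_compl measurableSet_Ioi hf]

theorem ae_cos_mul_ne_one {l : ℝ} (hl : l ≠ 0) : ∀ᵐ u : ℝ, Real.cos (l * u) ≠ 1 := by
  have hcount : {u : ℝ | Real.cos (l * u) = 1}.Countable := by
    refine (Set.countable_range fun n : ℤ => n * (2 * Real.pi) / l).mono fun u hu => ?_
    obtain ⟨n, hn⟩ := (Real.cos_eq_one_iff (l * u)).1 hu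
    exact ⟨n, by field_simp [hn]; linear_combination hn⟩
  exact measure_eq_zero_iff_ae_notMem.mp (hcount.measure_zero volume)

section

variable {K : ℝ → ℝ}

theorem integrable_cos_mul (hK : Integrable K) (l : ℝ) :
    Integrable (fun u => Real.cos (l * u) * K u) :=
  hK.bdd_mul (c := 1) (by fun_prop) (Eventually.of_forall fun u => Real.abs_cos_le_one _)

theorem integrable_one_sub_cos_mul (hK : Integrable K) (l : ℝ) :
    Integrable (fun u => (1 - Real.cos (l * u)) * K u) :=
  (hK.sub (integrable_cos_mul hK l)).congr (ae_of_all _ fun u => by simp [sub_mul])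

theorem re_integral_exp_mul_I (hK : Integrable K) (l : ℝ) :
    (∫ u : ℝ, cexp (I * l * u) * (K u : ℂ)).re = ∫ u, Real.cos (l * u) * K u := by
  have hint : Integrable (fun u : ℝ => cexp (I * l * u) * (K u : ℂ)) := by
    refine hK.ofReal.bdd_mul (c := 1) (by fun_prop) (Eventually.of_forall fun u => ?_)
    rw [show I * l * u = ((l * u : ℝ) : ℂ) * I by push_cast; ring, norm_exp_ofReal_mul_I]
  rw [← RCLike.re_eq_complex_re, ← integral_re hint]
  congr 1 with u
  simp [exp_re]

theorem re_sub_integral_exp_mul_I (hK : Integrable K) (l : ℝ) :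
    (((∫ t, K t : ℝ) : ℂ) - ∫ u : ℝ, cexp (I * l * u) * (K u : ℂ)).re =
      ∫ u in Set.Ioi 0, (1 - Real.cos (l * u)) * (K u + K (-u)) := by
  have h_sub :
      (∫ u, K u) - ∫ u, Real.cos (l * u) * K u = ∫ u, (1 - Real.cos (l * u)) * K u := by
    rw [← integral_sub hK (integrable_cos_mul hK l)]
    simp only [sub_mul, one_mul]
  rw [sub_re, ofReal_re, re_integral_exp_mul_I hK l, h_sub,
    integral_eq_integral_Ioi_add_comp_neg (integrable_one_sub_cos_mul hK l)]
  congr 1 with u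
  rw [mul_neg, Real.cos_neg]
  ring

variable (hsym : ∀ t : ℝ, 0 ≤ t → 0 ≤ K t + K (-t))
include hsym

theorem one_sub_cos_mul_mul_add_neg_nonneg (l : ℝ) {u : ℝ} (hu : 0 ≤ u) :
    0 ≤ (1 - Real.cos (l * u)) * (K u + K (-u)) :=
  mul_nonneg (sub_nonneg.2 (Real.cos_le_one _)) (hsym u hu)

theorem integral_Ioi_one_sub_cos_mul_nonneg (l : ℝ) :
    0 ≤ ∫ u in Set.Ioi 0, (1 - Real.cos (l * u)) * (K u + K (-u)) :=
  setIntegral_nonneg measurableSet_Ioi fun _ hu =>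
    one_sub_cos_mul_mul_add_neg_nonneg hsym l (le_of_lt hu)

theorem integral_Ioi_one_sub_cos_mul_pos (hK : Integrable K) (hK_pos : 0 < ∫ t, K t)
    {l : ℝ} (hl : l ≠ 0) :
    0 < ∫ u in Set.Ioi 0, (1 - Real.cos (l * u)) * (K u + K (-u)) := by
  refine (integral_Ioi_one_sub_cos_mul_nonneg hsym l).lt_of_ne fun h_zero => hK_pos.ne' ?_
  have hint : IntegrableOn (fun u => (1 - Real.cos (l * u)) * (K u + K (-u))) (Set.Ioi 0) :=
    (integrable_one_sub_cos_mul (hK.add hK.comp_neg) l).integrableOn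
  have hnonneg : 0 ≤ᵐ[volume.restrict (Set.Ioi 0)]
      fun u => (1 - Real.cos (l * u)) * (K u + K (-u)) :=
    (ae_restrict_iff' measurableSet_Ioi).2
      (Eventually.of_forall fun _ hu => one_sub_cos_mul_mul_add_neg_nonneg hsym l (le_of_lt hu))
  have h_ae : (fun u => (1 - Real.cos (l * u)) * (K u + K (-u)))
      =ᵐ[volume.restrict (Set.Ioi 0)] 0 :=
    (integral_eq_zero_iff_of_nonneg_ae hnonneg hint).mp h_zero.symm
  have h_sym_ae : (fun u => K u + K (-u)) =ᵐ[volume.restrict (Set.Ioi 0)] 0 := by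
    filter_upwards [h_ae, ae_restrict_of_ae (ae_cos_mul_ne_one hl)] with u hu hcos
    exact (mul_eq_zero.mp hu).resolve_left (sub_ne_zero.2 hcos.symm)
  rw [integral_eq_integral_Ioi_add_comp_neg hK, integral_eq_zero_of_ae h_sym_ae]

end

theorem stmt_12_general (K₀ : ℝ → ℝ) (hK₀ : Integrable K₀)
    (hsym : ∀ t : ℝ, 0 ≤ t → 0 ≤ K₀ t + K₀ (-t))
    (hν₀ : 0 < ∫ t : ℝ, K₀ t)
    (d e : ℝ → ℂ)
    (hd : ∀ l : ℝ, d l =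
      ((∫ t : ℝ, K₀ t : ℝ) : ℂ) - ∫ u : ℝ, Complex.exp (Complex.I * l * u) * (K₀ u : ℂ))
    (he : ∀ l : ℝ, l ≠ 0 → e l = (1 + 1 / (l : ℂ) ^ 2) * d l) :
    (∀ l : ℝ,
      (d l).re = ∫ u in Set.Ioi (0 : ℝ), (1 - Real.cos (l * u)) * (K₀ u + K₀ (-u)) ∧
      0 ≤ (d l).re) ∧
    ∀ l : ℝ, l ≠ 0 → e l ≠ 0 := by
  have hd_re (l : ℝ) := (hd l ▸ re_sub_integral_exp_mul_I hK₀ l :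
    (d l).re = ∫ u in Set.Ioi 0, (1 - Real.cos (l * u)) * (K₀ u + K₀ (-u)))
  refine ⟨fun l => ⟨hd_re l, (hd_re l).symm ▸ integral_Ioi_one_sub_cos_mul_nonneg hsym l⟩,
    fun l hl => ?_⟩
  rw [he l hl]
  have hfactor : (1 + 1 / (l : ℂ) ^ 2) ≠ 0 := by
    exact_mod_cast (by positivity : (0 : ℝ) < 1 + 1 / l ^ 2).ne'
  refine mul_ne_zero hfactor fun hd_zero =>
    (integral_Ioi_one_sub_cos_mul_pos hsym hK₀ hν₀ hl).ne' ?_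
  rw [← hd_re l, hd_zero, zero_re]

theorem stmt_12 (K₀ : ℝ → ℝ) (hK₀ : Integrable K₀)
    (hsym : ∀ t : ℝ, 0 ≤ t → 0 ≤ K₀ t + K₀ (-t))
    (hν₀ : 0 < ∫ t : ℝ, K₀ t)
    (hmom2 : Integrable (fun t : ℝ => t ^ 2 * |K₀ t|))
    (hν₁ : (∫ t : ℝ, t * K₀ t) = 0)
    (hν₂ : 0 < ∫ t : ℝ, t ^ 2 * K₀ t)
    (d e : ℝ → ℂ)
    (hd : ∀ l : ℝ, d l =
      ((∫ t : ℝ, K₀ t : ℝ) : ℂ) - ∫ u : ℝ, Complex.exp (Complex.I * l * u) * (K₀ u : ℂ))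
    (he : ∀ l : ℝ, l ≠ 0 → e l = (1 + 1 / (l : ℂ) ^ 2) * d l)
    (he0 : e 0 = (((1 / 2 : ℝ) * ∫ t : ℝ, t ^ 2 * K₀ t : ℝ) : ℂ)) :
    (∀ l : ℝ,
      (d l).re = ∫ u in Set.Ioi (0 : ℝ), (1 - Real.cos (l * u)) * (K₀ u + K₀ (-u)) ∧
      0 ≤ (d l).re) ∧
    ∀ l : ℝ, l ≠ 0 → e l ≠ 0 :=
  stmt_12_general K₀ hK₀ hsym hν₀ d e hd he
end
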